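/- The Kuranishi map identifies the gauge-reduced Maurer–Cartan set with the Kuranishi set: let F be the Kuranishi map on sequences, F(a)_b = a_b + (1/2) h₂([a,a]_b), which is a bijection of the set of sequences {1,2,...} → g¹ with itself. Let MC∩N¹ be the set of sequences τ that satisfy the Maurer–Cartan equation degreewise and have τ_b ∈ range ∇₁ ⊔ range h₂ (no boundary component) for all b, and let Kur be the set of sequences y with y_b ∈ range ∇₁ for all b such that the obstructions of τ = F⁻¹(y) vanish: π₂([τ,τ]_b) = 0 for all b ≥ 1. Then F restricts to a bijection from MC∩N¹ onto Kur. -/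

import Mathlib

/-- Extension of a sequence indexed by {1,2,3,...} to ℕ by zero. -/
def ext {V : Type*} [AddCommGroup V] (a : ℕ+ → V) : ℕ → V :=
  fun n => if h : 0 < n then a ⟨n, h⟩ else 0

/-- The convolution [τ,τ´]_b = Σ_{i+j=b, i,j≥1} [τ_i, τ´_j] of two sequences
with respect to a bilinear bracket (terms with index 0 vanish). -/
def bconv {K V W : Type*} [Field K] [AddCommGroup V] [Module K V]
    [AddCommGroup W] [Module K W]
    (Q : V →ₗ[K] V →ₗ[K] W) (a b : ℕ+ → V) (n : ℕ+) : W :=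
  ∑ i ∈ Finset.range ((n : ℕ) + 1), Q (ext a i) (ext b ((n : ℕ) - i))

/-!
The Kuranishi map `F(a)_b = a_b + ½ h₂[a,a]_b` is triangular: its degree `b` correction only
involves `a_i` for `i < b`, so `F` can be inverted degree by degree.

If `τ` has no boundary component, the side conditions give `h₁ τ = 0`, and the homotopy formula
reads `τ = ∇₁π₁τ + h₂ d₁τ`; the Maurer–Cartan equation `d₁τ = -½[τ,τ]` then turns this into
`F(τ) = ∇₁π₁τ`, and applying `π₂` to it shows that the obstructions `π₂[τ,τ]_b` vanish.

Conversely, let `τ = F⁻¹(y)` with `y` harmonic and vanishing obstructions, and assume the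
Maurer–Cartan equation below degree `b`. The Leibniz rule turns `d₂[τ,τ]_b` into
`2 β(d₁τ, τ)_b = -β([τ,τ], τ)_b`, and the sum defining `β([τ,τ], τ)_b` is invariant under cyclic
rotation of its index triples, so by the Jacobi identity three times it vanishes. With `π₂[τ,τ]_b = 0` the
second homotopy formula gives `[τ,τ]_b = d₁h₂[τ,τ]_b`, and since `d₁y = 0` this is
`d₁τ_b = -½[τ,τ]_b`.
-/

open Finset.HasAntidiagonal (antidiagonal mem_antidiagonal)
open Finset (mem_sigma sum_congr sum_add_distrib sum_eq_zero
  sum_nbij' sum_sigma' smul_sum)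
open Function

section StrictlyCausal

variable {V : Type*} [AddCommGroup V]

def IsStrictlyCausal (G : (ℕ+ → V) → ℕ+ → V) : Prop :=
  ∀ a a' n, (∀ i < n, a i = a' i) → G a n = G a' n

-- A strictly causal `G` never sees the `else 0` branch.
def causalPreimage (G : (ℕ+ → V) → ℕ+ → V) (y : ℕ+ → V) (n : ℕ+) : V :=
  y n - G (fun i => if i < n then causalPreimage G y i else 0) n
termination_by (n : ℕ)
decreasing_by assumption

namespace IsStrictlyCausal

variable {G : (ℕ+ → V) → ℕ+ → V}

theorem injective_add (hG : IsStrictlyCausal G) : Injective fun a n => a n + G a n := by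
  intro a a' h
  funext n
  induction n using WellFoundedLT.induction with
  | _ n ih =>
    have hn : a n + G a n = a' n + G a' n := congrFun h n
    rw [hG a a' n ih] at hn
    exact add_right_cancel hn

theorem causalPreimage_eq (hG : IsStrictlyCausal G) (y : ℕ+ → V) (n : ℕ+) :
    causalPreimage G y n = y n - G (causalPreimage G y) n := by
  rw [causalPreimage, hG _ (causalPreimage G y) n fun i hi => if_pos hi]

theorem surjective_add (hG : IsStrictlyCausal G) : Surjective fun a n => a n + G a n :=
  fun y => ⟨causalPreimage G y, funext fun n => by
    simp only [hG.causalPreimage_eq y n, sub_add_cancel]⟩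

theorem bijective_add (hG : IsStrictlyCausal G) : Bijective fun a n => a n + G a n :=
  ⟨hG.injective_add, hG.surjective_add⟩

end IsStrictlyCausal

end StrictlyCausal

section Convolution

variable {R V V' W X : Type*} [CommRing R] [AddCommGroup V] [Module R V] [AddCommGroup V']
  [Module R V'] [AddCommGroup W] [Module R W] [AddCommGroup X] [Module R X]

@[simp]
theorem ext_zero (a : ℕ+ → V) : ext a 0 = 0 := by
  simp [ext]

@[simp]
theorem ext_coe (a : ℕ+ → V) (n : ℕ+) : ext a n = a n :=
  dif_pos n.pos

theorem ext_map {F : Type*} [FunLike F V W] [ZeroHomClass F V W] (f : F) (a : ℕ+ → V) (i : ℕ) :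
    ext (fun n => f (a n)) i = f (ext a i) := by
  unfold ext
  split_ifs <;> simp

theorem ext_smul (r : R) (a : ℕ+ → V) (i : ℕ) : ext (fun n => r • a n) i = r • ext a i := by
  unfold ext
  split_ifs <;> simp

theorem ext_congr_of_lt {a a' : ℕ+ → V} {n : ℕ+} (ha : ∀ i < n, a i = a' i) {k : ℕ}
    (hk : k < n) : ext a k = ext a' k := by
  unfold ext
  split_ifs with hk0
  · exact ha _ (PNat.mk_lt_mk _ _ hk0 n.pos |>.mpr hk)
  · rfl

def conv (Q : V →ₗ[R] V' →ₗ[R] W) (a : ℕ+ → V) (c : ℕ+ → V') (n : ℕ+) : W :=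
  ∑ x ∈ antidiagonal (n : ℕ), Q (ext a x.1) (ext c x.2)

theorem bconv_eq_conv {K : Type*} [Field K] [Module K V] [Module K W] (Q : V →ₗ[K] V →ₗ[K] W) :
    bconv Q = conv Q :=
  funext₃ fun a c n =>
    (Finset.Nat.sum_antidiagonal_eq_sum_range_succ (fun i j => Q (ext a i) (ext c j)) n).symm

variable (Q : V →ₗ[R] V' →ₗ[R] W)

theorem ext_conv (a : ℕ+ → V) (c : ℕ+ → V') (i : ℕ) :
    ext (conv Q a c) i = ∑ x ∈ antidiagonal i, Q (ext a x.1) (ext c x.2) := by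
  rcases Nat.eq_zero_or_pos i with rfl | hi
  · simp
  · lift i to ℕ+ using hi
    rw [ext_coe, conv]

theorem conv_congr_of_lt {a a' : ℕ+ → V} {c c' : ℕ+ → V'} {n : ℕ+} (ha : ∀ i < n, a i = a' i)
    (hc : ∀ i < n, c i = c' i) : conv Q a c n = conv Q a' c' n := by
  refine Finset.sum_congr rfl fun x hx => ?_
  rw [mem_antidiagonal] at hx
  rcases Nat.eq_zero_or_pos x.1 with h1 | h1
  · simp [h1]
  rcases Nat.eq_zero_or_pos x.2 with h2 | h2
  · simp [h2]
  rw [ext_congr_of_lt ha (by omega : x.1 < n), ext_congr_of_lt hc (by omega : x.2 < n)]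

theorem conv_flip (a : ℕ+ → V) (c : ℕ+ → V') (n : ℕ+) : conv Q.flip c a n = conv Q a c n := by
  rw [conv, conv, ← Finset.Nat.sum_antidiagonal_swap]
  rfl

theorem conv_smul_left (r : R) (a : ℕ+ → V) (c : ℕ+ → V') (n : ℕ+) :
    conv Q (fun i => r • a i) c n = r • conv Q a c n := by
  simp only [conv, ext_smul, map_smul, LinearMap.smul_apply, smul_sum]

theorem conv_comp_left (f : X →ₗ[R] V) (a : ℕ+ → X) (c : ℕ+ → V') (n : ℕ+) :
    conv (Q ∘ₗ f) a c n = conv Q (fun i => f (a i)) c n := by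
  simp only [conv, ext_map, LinearMap.comp_apply]

theorem map_conv_self_of_leibniz (Q : V →ₗ[R] V →ₗ[R] W) (d₁ : V →ₗ[R] W) (d₂ : W →ₗ[R] X)
    (β : W →ₗ[R] V →ₗ[R] X) (hL : ∀ x y, d₂ (Q x y) = β (d₁ x) y + β (d₁ y) x) (a : ℕ+ → V)
    (n : ℕ+) : d₂ (conv Q a a n) = 2 • conv β (fun i => d₁ (a i)) a n := calc
  d₂ (conv Q a a n) = conv (β ∘ₗ d₁) a a n + conv (β ∘ₗ d₁).flip a a n := by
    simp only [conv, map_sum, hL, sum_add_distrib]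
    rfl
  _ = 2 • conv β (fun i => d₁ (a i)) a n := by rw [conv_flip, conv_comp_left, two_nsmul]

end Convolution

theorem sum_antidiagonal_antidiagonal_rotate {M : Type*} [AddCommMonoid M] (f : ℕ → ℕ → ℕ → M)
    (n : ℕ) :
    ∑ x ∈ antidiagonal n, ∑ y ∈ antidiagonal x.1, f y.1 y.2 x.2 =
      ∑ x ∈ antidiagonal n, ∑ y ∈ antidiagonal x.1, f y.2 x.2 y.1 := by
  simp only [sum_sigma']
  refine sum_nbij' (fun ⟨⟨_, r⟩, ⟨p, q⟩⟩ => ⟨(r + p, q), (r, p)⟩)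
    (fun ⟨⟨_, r⟩, ⟨p, q⟩⟩ => ⟨(q + r, p), (q, r)⟩) ?_ ?_ ?_ ?_ ?_
  all_goals
    rintro ⟨⟨i, r⟩, ⟨p, q⟩⟩ h
    simp only [mem_sigma, mem_antidiagonal, and_true] at h ⊢
  all_goals
    obtain ⟨rfl, rfl⟩ := h
    first | rfl | omega

section MaurerCartan

variable {K V W X : Type*} [Field K] [AddCommGroup V] [Module K V] [AddCommGroup W] [Module K W]
  [AddCommGroup X] [Module K X] (Q : V →ₗ[K] V →ₗ[K] W)

theorem conv_conv_self_eq_zero [CharZero K] (β : W →ₗ[K] V →ₗ[K] X)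
    (hJ : ∀ x y z, β (Q x y) z + β (Q y z) x + β (Q z x) y = 0) (a : ℕ+ → V) (n : ℕ+) :
    conv β (conv Q a a) a n = 0 := by
  set f : ℕ → ℕ → ℕ → X := fun p q r => β (Q (ext a p) (ext a q)) (ext a r)
  set S := ∑ x ∈ antidiagonal (n : ℕ), ∑ y ∈ antidiagonal x.1, f y.1 y.2 x.2
  have hS : conv β (conv Q a a) a n = S := by
    simp only [S, f, conv, ext_conv, map_sum, LinearMap.sum_apply]
  have h3 : (3 : K) • S = 0 := calc
    (3 : K) • S = S + ∑ x ∈ antidiagonal (n : ℕ), ∑ y ∈ antidiagonal x.1, f y.2 x.2 y.1 +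
        ∑ x ∈ antidiagonal (n : ℕ), ∑ y ∈ antidiagonal x.1, f x.2 y.1 y.2 := by
      rw [← sum_antidiagonal_antidiagonal_rotate (fun p q r => f q r p),
        ← sum_antidiagonal_antidiagonal_rotate f, show (3 : K) = 1 + 1 + 1 by norm_num,
        add_smul, add_smul, one_smul]
    _ = 0 := by
      simp only [S, ← sum_add_distrib]
      exact sum_eq_zero fun x _ => sum_eq_zero fun y _ => hJ _ _ _
  rw [hS]
  exact (smul_eq_zero.mp h3).resolve_left three_ne_zero

theorem map_bconv_self_eq_zero_of_lt [CharZero K] (d₁ : V →ₗ[K] W) (d₂ : W →ₗ[K] X)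
    (β : W →ₗ[K] V →ₗ[K] X) (hL : ∀ x y, d₂ (Q x y) = β (d₁ x) y + β (d₁ y) x)
    (hJ : ∀ x y z, β (Q x y) z + β (Q y z) x + β (Q z x) y = 0) {τ : ℕ+ → V} {n : ℕ+}
    (hMC : ∀ i < n, d₁ (τ i) + (2 : K)⁻¹ • bconv Q τ τ i = 0) :
    d₂ (bconv Q τ τ n) = 0 := by
  have hd : ∀ i < n, d₁ (τ i) = -(2 : K)⁻¹ • conv Q τ τ i := fun i hi => by
    rw [neg_smul, ← bconv_eq_conv]
    exact eq_neg_of_add_eq_zero_left (hMC i hi)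
  rw [bconv_eq_conv, map_conv_self_of_leibniz Q d₁ d₂ β hL, conv_congr_of_lt β hd fun _ _ => rfl,
    conv_smul_left, conv_conv_self_eq_zero Q β hJ, smul_zero, smul_zero]

def kuranishiMap (h : W →ₗ[K] V) (a : ℕ+ → V) (n : ℕ+) : V :=
  a n + (2 : K)⁻¹ • h (bconv Q a a n)

theorem kuranishiMap_bijective (h : W →ₗ[K] V) : Bijective (kuranishiMap Q h) :=
  IsStrictlyCausal.bijective_add (G := fun a n => (2 : K)⁻¹ • h (bconv Q a a n))
    fun a a' n ha => by simp only [bconv_eq_conv, conv_congr_of_lt Q ha ha]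

end MaurerCartan

section Retract

variable {K g0 g1 g2 g3 H1 H2 : Type*} [Field K] [AddCommGroup g0] [Module K g0]
  [AddCommGroup g1] [Module K g1] [AddCommGroup g2] [Module K g2] [AddCommGroup g3] [Module K g3]
  [AddCommGroup H1] [Module K H1] [AddCommGroup H2] [Module K H2]
  {d0 : g0 →ₗ[K] g1} {d1 : g1 →ₗ[K] g2} {d2 : g2 →ₗ[K] g3} {h1 : g1 →ₗ[K] g0}
  {h2 : g2 →ₗ[K] g1} {h3 : g3 →ₗ[K] g2} {π1 : g1 →ₗ[K] H1} {n1 : H1 →ₗ[K] g1}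
  {π2 : g2 →ₗ[K] H2} {n2 : H2 →ₗ[K] g2}

theorem map_eq_zero_of_mem_range_sup (hside1 : h1.comp h2 = 0) (hside3 : h1.comp n1 = 0) {x : g1}
    (hx : x ∈ LinearMap.range n1 ⊔ LinearMap.range h2) : h1 x = 0 :=
  sup_le (LinearMap.range_le_ker_iff.mpr hside3) (LinearMap.range_le_ker_iff.mpr hside1) hx

theorem add_smul_mem_range_of_add_smul_eq_zero
    (hSDR1 : d0.comp h1 + h2.comp d1 = LinearMap.id - n1.comp π1) {x : g1} {w : g2} {c : K}
    (hx : h1 x = 0) (hd : d1 x + c • w = 0) : x + c • h2 w ∈ LinearMap.range n1 := by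
  have e := LinearMap.congr_fun hSDR1 x
  simp only [LinearMap.add_apply, LinearMap.comp_apply, LinearMap.sub_apply, LinearMap.id_apply,
    hx, map_zero, zero_add, eq_neg_of_add_eq_zero_left hd, map_neg, map_smul] at e
  exact ⟨π1 x, by linear_combination (norm := module) e⟩

theorem map_eq_zero_of_add_smul_eq_zero (hπd : π2.comp d1 = 0) {x : g1} {w : g2} {c : K}
    (hc : c ≠ 0) (hd : d1 x + c • w = 0) : π2 w = 0 := by
  have e := congrArg π2 hd
  rw [map_add, map_smul, map_zero, ← LinearMap.comp_apply, hπd, LinearMap.zero_apply,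
    zero_add] at e
  exact (smul_eq_zero.mp e).resolve_left hc

theorem map_sub_smul_add_smul_eq_zero (hSDR2 : d1.comp h2 + h3.comp d2 = LinearMap.id - n2.comp π2)
    (hdn : d1.comp n1 = 0) {y : g1} {w : g2} (c : K) (hy : y ∈ LinearMap.range n1)
    (hπ : π2 w = 0) (hd : d2 w = 0) : d1 (y - c • h2 w) + c • w = 0 := by
  have hy0 : d1 y = 0 := LinearMap.range_le_ker_iff.mpr hdn hy
  have hw : d1 (h2 w) = w := by
    simpa [hπ, hd] using LinearMap.congr_fun hSDR2 w
  rw [map_sub, map_smul, hy0, hw, zero_sub, neg_add_cancel]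

theorem isMaurerCartan_of_kuranishiMap_mem_range [CharZero K]
    (hSDR2 : d1.comp h2 + h3.comp d2 = LinearMap.id - n2.comp π2) (hdn : d1.comp n1 = 0)
    (br : g1 →ₗ[K] g1 →ₗ[K] g2) (β : g2 →ₗ[K] g1 →ₗ[K] g3)
    (hLeibniz : ∀ x y : g1, d2 (br x y) = β (d1 x) y + β (d1 y) x)
    (hJacobi : ∀ x y z : g1, β (br x y) z + β (br y z) x + β (br z x) y = 0) {τ : ℕ+ → g1}
    (hy : ∀ b, kuranishiMap br h2 τ b ∈ LinearMap.range n1)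
    (hobs : ∀ b, π2 (bconv br τ τ b) = 0) (b : ℕ+) :
    d1 (τ b) + (2 : K)⁻¹ • bconv br τ τ b = 0 := by
  induction b using WellFoundedLT.induction with
  | _ b ih =>
    have := map_sub_smul_add_smul_eq_zero hSDR2 hdn (2 : K)⁻¹ (hy b) (hobs b)
      (map_bconv_self_eq_zero_of_lt br d1 d2 β hLeibniz hJacobi ih)
    rwa [kuranishiMap, add_sub_cancel_right] at this

end Retract

theorem stmt15_general (K : Type*) [Field K] [CharZero K]
    (g0 g1 g2 g3 H1 H2 : Type*)
    [AddCommGroup g0] [Module K g0] [AddCommGroup g1] [Module K g1]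
    [AddCommGroup g2] [Module K g2] [AddCommGroup g3] [Module K g3]
    [AddCommGroup H1] [Module K H1] [AddCommGroup H2] [Module K H2]
    (d0 : g0 →ₗ[K] g1) (d1 : g1 →ₗ[K] g2) (d2 : g2 →ₗ[K] g3)
    (h1 : g1 →ₗ[K] g0) (h2 : g2 →ₗ[K] g1) (h3 : g3 →ₗ[K] g2)
    (π1 : g1 →ₗ[K] H1) (n1 : H1 →ₗ[K] g1)
    (π2 : g2 →ₗ[K] H2) (n2 : H2 →ₗ[K] g2)
    (hSDR1 : d0.comp h1 + h2.comp d1 = LinearMap.id - n1.comp π1)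
    (hSDR2 : d1.comp h2 + h3.comp d2 = LinearMap.id - n2.comp π2)
    (hside1 : h1.comp h2 = 0)
    (hside3 : h1.comp n1 = 0)
    (hdn : d1.comp n1 = 0) (hπd : π2.comp d1 = 0)
    (br : g1 →ₗ[K] g1 →ₗ[K] g2)
    (β : g2 →ₗ[K] g1 →ₗ[K] g3)
    (hLeibniz : ∀ x y : g1, d2 (br x y) = β (d1 x) y + β (d1 y) x)
    (hJacobi : ∀ x y z : g1, β (br x y) z + β (br y z) x + β (br z x) y = 0) :
    Function.Bijective
      (fun (a : ℕ+ → g1) => fun b => a b + (2 : K)⁻¹ • h2 (bconv br a a b)) ∧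
    (fun (a : ℕ+ → g1) => fun b => a b + (2 : K)⁻¹ • h2 (bconv br a a b)) ''
        {τ : ℕ+ → g1 |
          (∀ b : ℕ+, d1 (τ b) + (2 : K)⁻¹ • bconv br τ τ b = 0) ∧
          (∀ b : ℕ+, τ b ∈ LinearMap.range n1 ⊔ LinearMap.range h2)}
      = {y : ℕ+ → g1 |
          (∀ b : ℕ+, y b ∈ LinearMap.range n1) ∧
          (∀ τ : ℕ+ → g1,
            (fun b => τ b + (2 : K)⁻¹ • h2 (bconv br τ τ b)) = y →
            ∀ b : ℕ+, π2 (bconv br τ τ b) = 0)} := by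
  have hF : Function.Bijective (kuranishiMap br h2) := kuranishiMap_bijective br h2
  refine ⟨hF, Set.ext fun y => ⟨?_, ?_⟩⟩
  · rintro ⟨τ, ⟨hMC, hN⟩, rfl⟩
    refine ⟨fun b => ?_, fun τ' hτ' => ?_⟩
    · exact add_smul_mem_range_of_add_smul_eq_zero hSDR1
        (map_eq_zero_of_mem_range_sup hside1 hside3 (hN b)) (hMC b)
    · obtain rfl := hF.1 hτ'
      exact fun b => map_eq_zero_of_add_smul_eq_zero hπd (by norm_num) (hMC b)
  · rintro ⟨hy, hobs⟩
    obtain ⟨τ, rfl⟩ := hF.2 y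
    refine ⟨τ, ⟨isMaurerCartan_of_kuranishiMap_mem_range hSDR2 hdn br β hLeibniz hJacobi hy
      (hobs τ rfl), fun b => ?_⟩, rfl⟩
    rw [← add_sub_cancel_right (τ b) ((2 : K)⁻¹ • h2 (bconv br τ τ b))]
    exact Submodule.sub_mem_sup (hy b) ⟨_, map_smul h2 _ _⟩

/-- The Kuranishi map F(a)_b = a_b + (1/2)h₂([a,a]_b) is a
bijection of the set of sequences {1,2,...} → g¹ with itself, and it
restricts to a bijection from
MC∩N¹ = {τ | τ satisfies MC degreewise and τ_b ∈ range ∇₁ ⊔ range h₂ ∀b}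
onto
Kur = {y | y_b ∈ range ∇₁ ∀b, and the obstructions of τ = F⁻¹(y) vanish:
π₂([τ,τ]_b) = 0 ∀b ≥ 1}. -/
theorem stmt15 (K : Type*) [Field K] [CharZero K]
    (g0 g1 g2 g3 H1 H2 : Type*)
    [AddCommGroup g0] [Module K g0] [AddCommGroup g1] [Module K g1]
    [AddCommGroup g2] [Module K g2] [AddCommGroup g3] [Module K g3]
    [AddCommGroup H1] [Module K H1] [AddCommGroup H2] [Module K H2]
    (d0 : g0 →ₗ[K] g1) (d1 : g1 →ₗ[K] g2) (d2 : g2 →ₗ[K] g3)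
    (h1 : g1 →ₗ[K] g0) (h2 : g2 →ₗ[K] g1) (h3 : g3 →ₗ[K] g2)
    (π1 : g1 →ₗ[K] H1) (n1 : H1 →ₗ[K] g1)
    (π2 : g2 →ₗ[K] H2) (n2 : H2 →ₗ[K] g2)
    (hdd1 : d1.comp d0 = 0) (hdd2 : d2.comp d1 = 0)
    (hSDR1 : d0.comp h1 + h2.comp d1 = LinearMap.id - n1.comp π1)
    (hSDR2 : d1.comp h2 + h3.comp d2 = LinearMap.id - n2.comp π2)
    (hside1 : h1.comp h2 = 0) (hside2 : π1.comp h2 = 0)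
    (hside3 : h1.comp n1 = 0) (hretr : π1.comp n1 = LinearMap.id)
    (hdn : d1.comp n1 = 0) (hπd : π2.comp d1 = 0)
    (br : g1 →ₗ[K] g1 →ₗ[K] g2) (hbrsymm : ∀ x y : g1, br x y = br y x)
    (β : g2 →ₗ[K] g1 →ₗ[K] g3)
    (hLeibniz : ∀ x y : g1, d2 (br x y) = β (d1 x) y + β (d1 y) x)
    (hJacobi : ∀ x y z : g1, β (br x y) z + β (br y z) x + β (br z x) y = 0) :
    Function.Bijective
      (fun (a : ℕ+ → g1) => fun b => a b + (2 : K)⁻¹ • h2 (bconv br a a b)) ∧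
    (fun (a : ℕ+ → g1) => fun b => a b + (2 : K)⁻¹ • h2 (bconv br a a b)) ''
        {τ : ℕ+ → g1 |
          (∀ b : ℕ+, d1 (τ b) + (2 : K)⁻¹ • bconv br τ τ b = 0) ∧
          (∀ b : ℕ+, τ b ∈ LinearMap.range n1 ⊔ LinearMap.range h2)}
      = {y : ℕ+ → g1 |
          (∀ b : ℕ+, y b ∈ LinearMap.range n1) ∧
          (∀ τ : ℕ+ → g1,
            (fun b => τ b + (2 : K)⁻¹ • h2 (bconv br τ τ b)) = y →
            ∀ b : ℕ+, π2 (bconv br τ τ b) = 0)} :=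
  stmt15_general K g0 g1 g2 g3 H1 H2 d0 d1 d2 h1 h2 h3 π1 n1 π2 n2 hSDR1 hSDR2 hside1 hside3 hdn hπd
    br β hLeibniz hJacobi
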